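/- Let R be a ring with elements t0, t1, t0v, t1v satisfying t0 + t1 + t0v + t1v = -1, such that each of t0^2, t1^2, t0v^2, t1v^2 is central in R. Then t0 commutes with (t1 + t1v)(t1 + t1v + 2). -/

import Mathlib

theorem Commute.self_add_sq_right {R : Type*} [Ring R] {a b : R}
    (ha : Commute (a ^ 2) b) (hb : Commute a (b ^ 2)) : Commute a ((a + b) ^ 2) := by
  -- `a` commutes with `a * b + b * a` exactly when `a ^ 2` commutes with `b`.
  show a * (a + b) ^ 2 = (a + b) ^ 2 * a
  linear_combination (norm := noncomm_ring) ha.eq + hb.eq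

theorem mul_add_two_eq_add_one_sq_sub_one {R : Type*} [Ring R] (x : R) :
    x * (x + 2) = (x + 1) ^ 2 - 1 := by
  noncomm_ring

theorem stmt_3_general {R : Type*} [Ring R] (t0 t1 t0v t1v : R)
    (hsum : t0 + t1 + t0v + t1v = -1)
    (h0 : ∀ r : R, t0 ^ 2 * r = r * t0 ^ 2)
    (h0v : ∀ r : R, t0v ^ 2 * r = r * t0v ^ 2) :
    t0 * ((t1 + t1v) * (t1 + t1v + 2)) = ((t1 + t1v) * (t1 + t1v + 2)) * t0 := by
  have hshift : t1 + t1v + 1 = -(t0 + t0v) := by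
    rw [eq_neg_iff_add_eq_zero, ← neg_add_cancel (1 : R), ← hsum]
    abel
  have hB : (t1 + t1v) * (t1 + t1v + 2) = (t0 + t0v) ^ 2 - 1 := by
    rw [mul_add_two_eq_add_one_sq_sub_one, hshift, neg_sq]
  rw [hB]
  exact ((Commute.self_add_sq_right (h0 t0v) (h0v t0).symm).sub_right (Commute.one_right t0)).eq

/-- In the universal additive DAHA relations, `t0` commutes with
`(t1 + t1v)(t1 + t1v + 2)`. -/
theorem stmt_3 {R : Type*} [Ring R] (t0 t1 t0v t1v : R)
    (hsum : t0 + t1 + t0v + t1v = -1)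
    (h0 : ∀ r : R, t0 ^ 2 * r = r * t0 ^ 2)
    (h1 : ∀ r : R, t1 ^ 2 * r = r * t1 ^ 2)
    (h0v : ∀ r : R, t0v ^ 2 * r = r * t0v ^ 2)
    (h1v : ∀ r : R, t1v ^ 2 * r = r * t1v ^ 2) :
    t0 * ((t1 + t1v) * (t1 + t1v + 2)) = ((t1 + t1v) * (t1 + t1v + 2)) * t0 :=
  stmt_3_general t0 t1 t0v t1v hsum h0 h0v
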